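/- Let G be a finite simple graph of order n ≥ 5 and let Ḡ be its complement. Then γ_cer(G) + γ_cer(Ḡ) ≤ n + 2 and γ_cer(G) · γ_cer(Ḡ) ≤ 2n. Moreover, the following are equivalent: (a) γ_cer(G) + γ_cer(Ḡ) = n + 2; (b) γ_cer(G) · γ_cer(Ḡ) = 2n; (c) G or Ḡ is the corona of some graph, i.e., every vertex of G, or every vertex of Ḡ, is either a leaf or is adjacent to exactly one leaf. -/

import Mathlib

/-!
If both `γ_cer(G)` and `γ_cer(Ḡ)` are at least 3, then `G` and `Ḡ` have minimum degree at
least 2, because a vertex of degree at most one yields a certified dominating set with at most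
two vertices in `G` or in `Ḡ`. For minimum degree at least 2 the certified domination number is
the domination number, and the greedy bound `(γ(G) - 1)(γ(Ḡ) - 1) ≤ n - 1` then gives both
inequalities strictly. Otherwise one of the two numbers is at most 2, the bounds follow from
`γ_cer ≤ n`, and equality means that one number is `n` and the other is 2. A corona has
`γ_cer = n`, since every support and then every leaf lies in each certified dominating set, and
its complement has `γ_cer = 2`. Conversely `γ_cer(Ḡ) = 2` excludes isolated vertices of `G`, and
a graph without isolated vertices that is not a corona has a proper certified dominating set.
-/

open Finset

variable {V : Type*} [Fintype V] [DecidableEq V]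

/-- `D` is a dominating set of `G`: every vertex outside `D` has a neighbour in `D`. -/
def IsDomSet (G : SimpleGraph V) (D : Finset V) : Prop :=
  ∀ v ∉ D, ∃ u ∈ D, G.Adj u v

/-- `D` is a certified dominating set of `G`: it is dominating and every vertex of `D`
has either zero or at least two neighbours outside `D`. -/
def IsCertDomSet (G : SimpleGraph V) [DecidableRel G.Adj] (D : Finset V) : Prop :=
  IsDomSet G D ∧ ∀ v ∈ D, (G.neighborFinset v \ D).card = 0 ∨ 2 ≤ (G.neighborFinset v \ D).card

/-- The domination number: minimum cardinality of a dominating set. -/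
noncomputable def gamma (G : SimpleGraph V) : ℕ :=
  sInf {n | ∃ D : Finset V, IsDomSet G D ∧ D.card = n}

/-- The certified domination number: minimum cardinality of a certified dominating set. -/
noncomputable def gammaCer (G : SimpleGraph V) [DecidableRel G.Adj] : ℕ :=
  sInf {n | ∃ D : Finset V, IsCertDomSet G D ∧ D.card = n}

/-- A leaf is a vertex of degree one. -/
abbrev IsLeaf (G : SimpleGraph V) [DecidableRel G.Adj] (v : V) : Prop := G.degree v = 1

/-- The set of leaf-neighbours of a vertex. -/
abbrev leafNbrs (G : SimpleGraph V) [DecidableRel G.Adj] (v : V) : Finset V :=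
  (G.neighborFinset v).filter (fun l => G.degree l = 1)

/-- A weak support is a vertex adjacent to exactly one leaf. -/
abbrev IsWeakSupport (G : SimpleGraph V) [DecidableRel G.Adj] (v : V) : Prop :=
  (leafNbrs G v).card = 1

/-- A strong support is a vertex adjacent to at least two leaves. -/
abbrev IsStrongSupport (G : SimpleGraph V) [DecidableRel G.Adj] (v : V) : Prop :=
  2 ≤ (leafNbrs G v).card

set_option linter.unusedSectionVars false

section Basic

variable (G : SimpleGraph V)

lemma isDomSet_univ : IsDomSet G univ := fun v hv => absurd (mem_univ v) hv

lemma IsDomSet.gamma_le {G : SimpleGraph V} {D : Finset V} (hD : IsDomSet G D) :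
    gamma G ≤ #D :=
  Nat.sInf_le ⟨D, hD, rfl⟩

lemma exists_isDomSet_card_eq_gamma : ∃ D, IsDomSet G D ∧ #D = gamma G :=
  Nat.sInf_mem (s := {n | ∃ D, IsDomSet G D ∧ #D = n}) ⟨_, univ, isDomSet_univ G, rfl⟩

variable [DecidableRel G.Adj]

lemma isCertDomSet_univ : IsCertDomSet G univ :=
  ⟨isDomSet_univ G, fun _ _ => Or.inl (by simp)⟩

lemma IsCertDomSet.gammaCer_le {G : SimpleGraph V} [DecidableRel G.Adj] {D : Finset V}
    (hD : IsCertDomSet G D) : gammaCer G ≤ #D :=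
  Nat.sInf_le ⟨D, hD, rfl⟩

lemma exists_isCertDomSet_card_eq_gammaCer : ∃ D, IsCertDomSet G D ∧ #D = gammaCer G :=
  Nat.sInf_mem (s := {n | ∃ D, IsCertDomSet G D ∧ #D = n})
    ⟨_, univ, isCertDomSet_univ G, rfl⟩

lemma gammaCer_le_card : gammaCer G ≤ Fintype.card V :=
  (isCertDomSet_univ G).gammaCer_le

lemma gamma_le_gammaCer : gamma G ≤ gammaCer G := by
  obtain ⟨D, hD, hcard⟩ := exists_isCertDomSet_card_eq_gammaCer G
  exact hcard ▸ hD.1.gamma_le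

lemma gammaCer_congr {H : SimpleGraph V} [DecidableRel H.Adj] (h : G = H) :
    gammaCer G = gammaCer H := by
  subst h
  congr

end Basic

section SmallSets

variable {G : SimpleGraph V} [DecidableRel G.Adj]

lemma eq_of_adj_of_degree_eq_one {l x y : V} (hl : G.degree l = 1) (hx : G.Adj l x)
    (hy : G.Adj l y) : x = y :=
  (SimpleGraph.degree_eq_one_iff_existsUnique_adj.1 hl).unique hx hy

lemma exists_adj_of_degree_eq_one {l : V} (hl : G.degree l = 1) : ∃ w, G.Adj l w :=
  (SimpleGraph.degree_eq_one_iff_existsUnique_adj.1 hl).exists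

lemma compl_adj_of_degree_eq_one {l w x : V} (hl : G.degree l = 1) (hlw : G.Adj l w)
    (hxl : x ≠ l) (hxw : x ≠ w) : Gᶜ.Adj l x :=
  (G.compl_adj l x).2 ⟨hxl.symm, fun h => hxw (eq_of_adj_of_degree_eq_one hl h hlw)⟩

lemma two_le_card_neighborFinset_sdiff {A D : Finset V} {v : V} (hDA : D ⊆ A)
    (hA : #A + 2 ≤ Fintype.card V) (hv : ∀ x ∉ A, G.Adj v x) :
    2 ≤ #(G.neighborFinset v \ D) := by
  have hsub : Aᶜ ⊆ G.neighborFinset v \ D := fun x hx => by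
    rw [mem_compl] at hx
    simpa [hv x hx] using fun h => hx (hDA h)
  have := card_le_card hsub
  rw [card_compl] at this
  omega

lemma isCertDomSet_pair_of_forall_adj (h5 : 5 ≤ Fintype.card V) {u v p q : V}
    (hu : ∀ x, x ≠ u → x ≠ p → G.Adj u x) (hv : ∀ x, x ≠ v → x ≠ q → G.Adj v x)
    (hvp : p ≠ v → G.Adj v p) : IsCertDomSet G {u, v} := by
  refine ⟨fun x hx => ?_, fun y hy => Or.inr ?_⟩
  · simp only [mem_insert, mem_singleton, not_or] at hx
    by_cases hxp : x = p
    · exact ⟨v, by simp, hxp ▸ hvp (hxp ▸ hx.2)⟩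
    · exact ⟨u, by simp, hu x hx.1 hxp⟩
  have h3 (a b c : V) : #{a, b, c} + 2 ≤ Fintype.card V := by
    have := card_le_three (a := a) (b := b) (c := c)
    omega
  rcases mem_insert.1 hy with rfl | hy
  · refine two_le_card_neighborFinset_sdiff (A := {y, p, v}) ?_ (h3 _ _ _) fun x hx => ?_
    · intro x; simp only [mem_insert, mem_singleton]; tauto
    · simp only [mem_insert, mem_singleton, not_or] at hx
      exact hu x hx.1 hx.2.1
  · rw [mem_singleton] at hy
    subst hy
    refine two_le_card_neighborFinset_sdiff (A := {y, q, u}) ?_ (h3 _ _ _) fun x hx => ?_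
    · intro x; simp only [mem_insert, mem_singleton]; tauto
    · simp only [mem_insert, mem_singleton, not_or] at hx
      exact hv x hx.1 hx.2.1

lemma isCertDomSet_pair_of_not_adj (h4 : 4 ≤ Fintype.card V) {w a : V}
    (hw : ∀ x, x ≠ w → x ≠ a → G.Adj w x) (hwa : ¬G.Adj w a) (ha : G.degree a ≠ 1) :
    IsCertDomSet G {w, a} := by
  refine ⟨fun x hx => ?_, fun y hy => ?_⟩
  · simp only [mem_insert, mem_singleton, not_or] at hx
    exact ⟨w, by simp, hw x hx.1 hx.2⟩
  rcases mem_insert.1 hy with rfl | hy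
  · refine Or.inr (two_le_card_neighborFinset_sdiff le_rfl ?_ fun x hx => ?_)
    · have := card_le_two (a := y) (b := a)
      omega
    · simp only [mem_insert, mem_singleton, not_or] at hx
      exact hw x hx.1 hx.2
  · rw [mem_singleton] at hy
    subst hy
    have hdisj : Disjoint (G.neighborFinset y) {w, y} := by
      simpa using fun h : G.Adj y w => hwa h.symm
    rw [sdiff_eq_self_of_disjoint hdisj, SimpleGraph.card_neighborFinset_eq_degree]
    omega

lemma gammaCer_compl_le_one_of_degree_eq_zero (h5 : 5 ≤ Fintype.card V) {v : V}
    (hv : G.degree v = 0) : gammaCer Gᶜ ≤ 1 := by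
  have hadj (x : V) (hx : x ≠ v) (_ : x ≠ v) : Gᶜ.Adj v x :=
    (G.compl_adj v x).2 ⟨hx.symm, fun h => by
      simpa [hv] using (G.degree_pos_iff_exists_adj v).2 ⟨x, h⟩⟩
  simpa using (isCertDomSet_pair_of_forall_adj h5 hadj hadj fun h => absurd rfl h).gammaCer_le

lemma exists_forall_adj_of_degree_eq_one (h4 : 4 ≤ Fintype.card V) (hb : 3 ≤ gammaCer Gᶜ)
    {l w : V} (hl : G.degree l = 1) (hlw : G.Adj l w) :
    ∃ a, ¬G.Adj w a ∧ ∀ x, x ≠ w → x ≠ a → G.Adj w x := by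
  have hw : Gᶜ.degree w = 1 := by
    by_contra hw
    have hcert := isCertDomSet_pair_of_not_adj h4
      (fun x hxl hxw => compl_adj_of_degree_eq_one hl hlw hxl hxw)
      (fun h => ((G.compl_adj l w).1 h).2 hlw) hw
    have := hcert.gammaCer_le.trans card_le_two
    omega
  obtain ⟨a, hwa, ha⟩ := SimpleGraph.degree_eq_one_iff_existsUnique_adj.1 hw
  refine ⟨a, ((G.compl_adj w a).1 hwa).2, fun x hxw hxa => ?_⟩
  by_contra hx
  exact hxa (ha x ((G.compl_adj w x).2 ⟨hxw.symm, hx⟩))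

lemma two_le_degree_of_three_le_gammaCer (h5 : 5 ≤ Fintype.card V) (ha : 3 ≤ gammaCer G)
    (hb : 3 ≤ gammaCer Gᶜ) (v : V) : 2 ≤ G.degree v := by
  by_contra! hv
  obtain hv | hv : G.degree v = 0 ∨ G.degree v = 1 := by omega
  · have := gammaCer_compl_le_one_of_degree_eq_zero h5 hv
    omega
  obtain ⟨w, hvw⟩ := exists_adj_of_degree_eq_one hv
  obtain ⟨a, hwa, hw⟩ := exists_forall_adj_of_degree_eq_one (by omega) hb hv hvw
  -- `{w, a}` certifies `G` unless `a` is a leaf, and then its support `b` misses only one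
  -- vertex as well, so `{w, b}` does.
  have hpair : ∃ b, IsCertDomSet G {w, b} := by
    by_cases hda : G.degree a = 1
    · obtain ⟨b, hab⟩ := exists_adj_of_degree_eq_one hda
      obtain ⟨_, -, hbx⟩ := exists_forall_adj_of_degree_eq_one (by omega) hb hda hab
      exact ⟨b, isCertDomSet_pair_of_forall_adj h5 hw hbx fun _ => hab.symm⟩
    · exact ⟨a, isCertDomSet_pair_of_not_adj (by omega) hw hwa hda⟩
  obtain ⟨b, hcert⟩ := hpair
  have := hcert.gammaCer_le.trans card_le_two
  omega

end SmallSets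

section Domination

variable {G : SimpleGraph V} [DecidableRel G.Adj]

variable (G) in
def edgeBoundaryCard (D : Finset V) : ℕ := ∑ v ∈ D, #(G.neighborFinset v \ D)

lemma adj_of_neighborFinset_sdiff_eq_singleton {D : Finset V} {v u : V}
    (hvu : G.neighborFinset v \ D = {u}) : G.Adj v u ∧ u ∉ D := by
  simpa using hvu.symm.subset (mem_singleton_self u)

lemma eq_of_neighborFinset_sdiff_eq_singleton {D : Finset V} {v u x : V}
    (hvu : G.neighborFinset v \ D = {u}) (hx : G.Adj v x) (hxD : x ∉ D) : x = u := by
  simpa using hvu.subset (mem_sdiff.2 ⟨(G.mem_neighborFinset v x).2 hx, hxD⟩)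

lemma IsDomSet.erase {D : Finset V} {v u w : V} (hD : IsDomSet G D)
    (hvu : G.neighborFinset v \ D = {u}) (hv : 2 ≤ G.degree v) (hwD : w ∈ D) (hwv : w ≠ v)
    (hwu : G.Adj w u) : IsDomSet G (D.erase v) := by
  intro x hx
  by_cases hxv : x = v
  · subst hxv
    obtain ⟨y, hy, hyu⟩ := exists_mem_ne (by rwa [G.card_neighborFinset_eq_degree]) u
    rw [SimpleGraph.mem_neighborFinset] at hy
    have hyD : y ∈ D :=
      by_contra fun hyD => hyu (eq_of_neighborFinset_sdiff_eq_singleton hvu hy hyD)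
    exact ⟨y, mem_erase.2 ⟨G.ne_of_adj hy.symm, hyD⟩, hy.symm⟩
  have hxD : x ∉ D := fun h => hx (mem_erase.2 ⟨hxv, h⟩)
  obtain ⟨d, hd, hdx⟩ := hD x hxD
  by_cases hdv : d = v
  · subst hdv
    exact ⟨w, mem_erase.2 ⟨hwv, hwD⟩,
      eq_of_neighborFinset_sdiff_eq_singleton hvu hdx hxD ▸ hwu⟩
  · exact ⟨d, mem_erase.2 ⟨hdv, hd⟩, hdx⟩

lemma IsDomSet.swap {D : Finset V} {v u : V} (hD : IsDomSet G D)
    (hvu : G.neighborFinset v \ D = {u}) : IsDomSet G (insert u (D.erase v)) := by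
  intro x hx
  simp only [mem_insert, mem_erase, not_or, not_and_or, not_not] at hx
  obtain ⟨hxu, hxv | hxD⟩ := hx
  · exact ⟨u, mem_insert_self u _,
      hxv ▸ (adj_of_neighborFinset_sdiff_eq_singleton hvu).1.symm⟩
  obtain ⟨d, hd, hdx⟩ := hD x hxD
  by_cases hdv : d = v
  · subst hdv
    exact absurd (eq_of_neighborFinset_sdiff_eq_singleton hvu hdx hxD) hxu
  · exact ⟨d, mem_insert_of_mem (mem_erase.2 ⟨hdv, hd⟩), hdx⟩

lemma edgeBoundaryCard_lt_swap {D : Finset V} {v u : V} (hvD : v ∈ D)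
    (hvu : G.neighborFinset v \ D = {u}) (hu : ∀ w ∈ D, G.Adj w u → w = v)
    (hdeg : 2 ≤ G.degree u) :
    edgeBoundaryCard G D < edgeBoundaryCard G (insert u (D.erase v)) := by
  set D' := insert u (D.erase v)
  have huD' : u ∉ D.erase v :=
    fun h => (adj_of_neighborFinset_sdiff_eq_singleton hvu).2 (mem_of_mem_erase h)
  have hmem {y : V} (hy : y ∈ D') : y = u ∨ y ∈ D ∧ y ≠ v := by
    simpa [D', and_comm] using hy
  have hnu : G.neighborFinset u \ D' = G.neighborFinset u := by
    refine sdiff_eq_self_of_disjoint (disjoint_left.2 fun y hy hyD' => ?_)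
    rw [SimpleGraph.mem_neighborFinset] at hy
    rcases hmem hyD' with rfl | ⟨hyD, hyv⟩
    · exact G.loopless.irrefl _ hy
    · exact hyv (hu y hyD hy.symm)
  have hmono : ∀ w ∈ D.erase v, #(G.neighborFinset w \ D) ≤ #(G.neighborFinset w \ D') := by
    refine fun w hw => card_le_card fun y hy => ?_
    obtain ⟨hwv, hwD⟩ := mem_erase.1 hw
    rw [mem_sdiff, SimpleGraph.mem_neighborFinset] at hy ⊢
    refine ⟨hy.1, fun hyD' => ?_⟩
    rcases hmem hyD' with rfl | ⟨hyD, -⟩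
    · exact hwv (hu w hwD hy.1)
    · exact hy.2 hyD
  have hD : edgeBoundaryCard G D = 1 + ∑ w ∈ D.erase v, #(G.neighborFinset w \ D) := by
    rw [edgeBoundaryCard, ← add_sum_erase D _ hvD, hvu, card_singleton]
  have hD' : edgeBoundaryCard G D' =
      G.degree u + ∑ w ∈ D.erase v, #(G.neighborFinset w \ D') := by
    rw [edgeBoundaryCard, sum_insert huD', hnu, G.card_neighborFinset_eq_degree]
  have := sum_le_sum hmono
  omega

/-- Among the minimum dominating sets take one with the most edges leaving it. A vertex `v` of
it with a single outside neighbour `u` would be redundant if `u` had another dominator, and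
otherwise swapping `v` for `u` would increase the number of leaving edges. -/
lemma gammaCer_le_gamma (hδ : ∀ v, 2 ≤ G.degree v) : gammaCer G ≤ gamma G := by
  classical
  obtain ⟨D, hDmin, hDmax⟩ := exists_max_image
    ({D | IsDomSet G D ∧ #D = gamma G} : Finset (Finset V)) (edgeBoundaryCard G)
    (let ⟨D, hD⟩ := exists_isDomSet_card_eq_gamma G; ⟨D, by simpa using hD⟩)
  simp only [mem_filter, mem_univ, true_and] at hDmin
  obtain ⟨hD, hcard⟩ := hDmin
  refine hcard ▸ IsCertDomSet.gammaCer_le ⟨hD, fun v hv => ?_⟩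
  by_contra! hv1
  obtain ⟨u, hvu⟩ := card_eq_one.1 (by omega : #(G.neighborFinset v \ D) = 1)
  have hDpos := card_pos.2 ⟨v, hv⟩
  have hu : ∀ w ∈ D, G.Adj w u → w = v := by
    by_contra! ⟨w, hwD, hwu, hwv⟩
    have := (hD.erase hvu (hδ v) hwD hwv hwu).gamma_le
    rw [card_erase_of_mem hv] at this
    omega
  have huD' : u ∉ D.erase v :=
    fun h => (adj_of_neighborFinset_sdiff_eq_singleton hvu).2 (mem_of_mem_erase h)
  have hswap := hDmax (insert u (D.erase v)) (by
    simp [hD.swap hvu, card_insert_of_notMem huD', card_erase_of_mem hv, ← hcard,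
      Nat.sub_add_cancel hDpos])
  exact absurd hswap (not_le.2 (edgeBoundaryCard_lt_swap hv hvu hu (hδ u)))

end Domination

section Complement

variable {G : SimpleGraph V} [DecidableRel G.Adj]

lemma exists_totally_dominating_card_mul_le {m : ℕ} (hm : 1 ≤ m)
    (h : ∀ S : Finset V, #S ≤ m → ∃ y, ∀ s ∈ S, G.Adj y s) (U : Finset V) :
    ∃ D : Finset V, (∀ u ∈ U, ∃ d ∈ D, G.Adj d u) ∧ #D * m + 1 ≤ #U + m := by
  induction U using Finset.strongInduction with
  | H U ih =>
  rcases U.eq_empty_or_nonempty with rfl | hU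
  · exact ⟨∅, by simp, by simpa⟩
  by_cases hsmall : #U ≤ m
  · obtain ⟨y, hy⟩ := h U hsmall
    refine ⟨{y}, fun u hu => ⟨y, mem_singleton_self y, hy u hu⟩, ?_⟩
    have := hU.card_pos
    simp only [card_singleton, one_mul]
    omega
  obtain ⟨S, hSU, hS⟩ := exists_subset_card_eq (show m ≤ #U by omega)
  obtain ⟨y, hy⟩ := h S hS.le
  have hSN : S ⊆ U ∩ G.neighborFinset y :=
    fun s hs => mem_inter.2 ⟨hSU hs, by simpa using hy s hs⟩
  have hSne : S.Nonempty := card_pos.1 (by omega)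
  obtain ⟨D, hD, hcard⟩ := ih (U \ G.neighborFinset y) (by
    rw [← sdiff_inter_self_left]
    exact sdiff_ssubset inter_subset_left (hSne.mono hSN))
  refine ⟨insert y D, fun u hu => ?_, ?_⟩
  · by_cases huy : G.Adj y u
    · exact ⟨y, mem_insert_self y D, huy⟩
    · obtain ⟨d, hd, hdu⟩ := hD u (by simp [hu, huy])
      exact ⟨d, mem_insert_of_mem hd, hdu⟩
  · have h1 := card_le_card hSN
    have h2 := card_sdiff_add_card_inter U (G.neighborFinset y)
    have h3 := Nat.mul_le_mul_right m (card_insert_le y D)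
    rw [add_mul, one_mul] at h3
    omega

lemma exists_forall_adj_of_card_lt_gamma_compl {S : Finset V} (hS : #S < gamma Gᶜ) :
    ∃ y, ∀ s ∈ S, G.Adj y s := by
  by_contra! h
  refine absurd (IsDomSet.gamma_le (G := Gᶜ) (D := S) fun y hy => ?_) (not_le.2 hS)
  obtain ⟨s, hs, hys⟩ := h y
  exact ⟨s, hs, (G.compl_adj s y).2 ⟨fun hsy => hy (hsy ▸ hs), fun h => hys h.symm⟩⟩

theorem gamma_sub_one_mul_gamma_compl_sub_one_le (hb : 2 ≤ gamma Gᶜ) :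
    (gamma G - 1) * (gamma Gᶜ - 1) ≤ Fintype.card V - 1 := by
  obtain ⟨D, hD, hcard⟩ := exists_totally_dominating_card_mul_le (m := gamma Gᶜ - 1)
    (by omega) (fun S hS => exists_forall_adj_of_card_lt_gamma_compl (G := G) (by omega)) univ
  have hγ : gamma G ≤ #D := IsDomSet.gamma_le fun v _ => hD v (mem_univ v)
  rw [card_univ] at hcard
  calc (gamma G - 1) * (gamma Gᶜ - 1) ≤ (#D - 1) * (gamma Gᶜ - 1) :=
        Nat.mul_le_mul_right _ (Nat.sub_le_sub_right hγ 1)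
    _ = #D * (gamma Gᶜ - 1) - (gamma Gᶜ - 1) := Nat.sub_one_mul _ _
    _ ≤ Fintype.card V - 1 := by omega

theorem gammaCer_sub_one_mul_gammaCer_compl_sub_one_le (h5 : 5 ≤ Fintype.card V)
    (ha : 3 ≤ gammaCer G) (hb : 3 ≤ gammaCer Gᶜ) :
    (gammaCer G - 1) * (gammaCer Gᶜ - 1) ≤ Fintype.card V - 1 := by
  have ha' : 3 ≤ gammaCer Gᶜᶜ := (gammaCer_congr _ (compl_compl G)).symm ▸ ha
  have hG : gammaCer G = gamma G :=
    (gammaCer_le_gamma (two_le_degree_of_three_le_gammaCer h5 ha hb)).antisymm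
      (gamma_le_gammaCer G)
  have hGc : gammaCer Gᶜ = gamma Gᶜ :=
    (gammaCer_le_gamma (two_le_degree_of_three_le_gammaCer h5 hb ha')).antisymm
      (gamma_le_gammaCer Gᶜ)
  rw [hG, hGc]
  exact gamma_sub_one_mul_gamma_compl_sub_one_le (by omega)

end Complement

theorem Nat.nordhausGaddum_bounds {a b n : ℕ} (hn : 1 ≤ n) (ha : a ≤ n) (hb : b ≤ n)
    (hab : 3 ≤ a → 3 ≤ b → (a - 1) * (b - 1) ≤ n - 1) :
    a + b ≤ n + 2 ∧ a * b ≤ 2 * n ∧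
      (a + b = n + 2 ↔ a = n ∧ b = 2 ∨ a = 2 ∧ b = n) ∧
      (a * b = 2 * n ↔ a = n ∧ b = 2 ∨ a = 2 ∧ b = n) := by
  rcases le_or_gt a 2 with ha2 | ha2
  · interval_cases a <;> omega
  rcases le_or_gt b 2 with hb2 | hb2
  · interval_cases b <;> omega
  obtain ⟨a, rfl⟩ : ∃ c, a = c + 3 := ⟨a - 3, by omega⟩
  obtain ⟨b, rfl⟩ : ∃ c, b = c + 3 := ⟨b - 3, by omega⟩
  have := hab (by omega) (by omega)
  rw [show a + 3 - 1 = a + 2 by omega, show b + 3 - 1 = b + 2 by omega] at this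
  have hprod' : (a + 2) * (b + 2) + 1 ≤ n := by omega
  have hsum : a + b + 6 ≤ n + 1 := by nlinarith
  have hprod : (a + 3) * (b + 3) + 1 ≤ 2 * n := by nlinarith
  omega

section Corona

variable {G : SimpleGraph V} [DecidableRel G.Adj]

variable (G) in
def IsCorona : Prop := ∀ v, IsLeaf G v ∨ IsWeakSupport G v

lemma IsCorona.card_leafNbrs_le_one (hG : IsCorona G) (v : V) : #(leafNbrs G v) ≤ 1 := by
  rcases hG v with hv | hv
  · exact (card_filter_le _ _).trans (G.card_neighborFinset_eq_degree v ▸ hv.le)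
  · exact hv.le

lemma IsCorona.eq_of_adj_of_degree_eq_one (hG : IsCorona G) {w l l' : V}
    (hl : G.degree l = 1) (hl' : G.degree l' = 1) (hw : G.Adj w l) (hw' : G.Adj w l') :
    l = l' :=
  card_le_one.1 (hG.card_leafNbrs_le_one w) l (by simp [hw, hl]) l' (by simp [hw', hl'])

lemma IsCorona.exists_leaf_adj (hG : IsCorona G) (v : V) :
    ∃ l w, G.degree l = 1 ∧ G.Adj l w ∧ (v = l ∨ v = w) := by
  rcases hG v with hv | hv
  · obtain ⟨w, hw⟩ := exists_adj_of_degree_eq_one hv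
    exact ⟨v, w, hv, hw, Or.inl rfl⟩
  · obtain ⟨l, hl⟩ := card_pos.1 (by omega : 0 < #(leafNbrs G v))
    simp only [mem_filter, SimpleGraph.mem_neighborFinset] at hl
    exact ⟨l, v, hl.2, hl.1.symm, Or.inr rfl⟩

lemma IsCorona.degree_pos (hG : IsCorona G) (v : V) : 0 < G.degree v := by
  obtain ⟨l, w, -, hlw, rfl | rfl⟩ := hG.exists_leaf_adj v
  exacts [(G.degree_pos_iff_exists_adj _).2 ⟨w, hlw⟩,
    (G.degree_pos_iff_exists_adj _).2 ⟨l, hlw.symm⟩]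

lemma IsCertDomSet.mem_of_adj_of_degree_eq_one {D : Finset V} (hD : IsCertDomSet G D)
    {l w : V} (hl : G.degree l = 1) (hlw : G.Adj l w) : w ∈ D := by
  by_contra hw
  have hlD : l ∈ D := by
    by_contra hlD
    obtain ⟨d, hd, hdl⟩ := hD.1 l hlD
    exact hw (eq_of_adj_of_degree_eq_one hl hdl.symm hlw ▸ hd)
  have hext : G.neighborFinset l \ D = {w} := by
    ext x
    simp only [mem_sdiff, SimpleGraph.mem_neighborFinset, mem_singleton]
    exact ⟨fun h => eq_of_adj_of_degree_eq_one hl h.1 hlw, fun h => h ▸ ⟨hlw, hw⟩⟩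
  simpa [hext] using hD.2 l hlD

theorem IsCorona.gammaCer_eq_card (hG : IsCorona G) : gammaCer G = Fintype.card V := by
  obtain ⟨D, hD, hcard⟩ := exists_isCertDomSet_card_eq_gammaCer G
  have hsupp {v : V} (hv : IsWeakSupport G v) : v ∈ D := by
    obtain ⟨l, hl⟩ := card_pos.1 (by omega : 0 < #(leafNbrs G v))
    simp only [mem_filter, SimpleGraph.mem_neighborFinset] at hl
    exact hD.mem_of_adj_of_degree_eq_one hl.2 hl.1.symm
  suffices D = univ by rw [← hcard, this, card_univ]
  refine eq_univ_of_forall fun v => (hG v).elim (fun hv => ?_) hsupp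
  by_contra hvD
  obtain ⟨w, hvw⟩ := exists_adj_of_degree_eq_one hv
  have hwD := hD.mem_of_adj_of_degree_eq_one hv hvw
  have h2 : 2 ≤ #(G.neighborFinset w \ D) := (hD.2 w hwD).resolve_left
    (card_ne_zero_of_mem (a := v) (by simp [hvw.symm, hvD]))
  obtain ⟨y, hy, hyv⟩ := exists_mem_ne h2 v
  simp only [mem_sdiff, SimpleGraph.mem_neighborFinset] at hy
  have hy1 : G.degree y = 1 := (hG y).resolve_right fun h => hy.2 (hsupp h)
  exact hyv (hG.eq_of_adj_of_degree_eq_one hy1 hv hy.1 hvw.symm)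

lemma two_le_gamma_compl [Nonempty V] (hδ : ∀ v, 0 < G.degree v) : 2 ≤ gamma Gᶜ := by
  obtain ⟨D, hD, hcard⟩ := exists_isDomSet_card_eq_gamma Gᶜ
  by_contra! h
  have hD1 : ∀ a ∈ D, ∀ b ∈ D, a = b := card_le_one.1 (by omega)
  obtain ⟨u, hu⟩ : D.Nonempty := by
    obtain ⟨x⟩ := ‹Nonempty V›
    by_cases hx : x ∈ D
    exacts [⟨x, hx⟩, let ⟨d, hd, _⟩ := hD x hx; ⟨d, hd⟩]
  obtain ⟨t, hut⟩ := (G.degree_pos_iff_exists_adj u).1 (hδ u)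
  obtain ⟨d, hd, hdt⟩ := hD t fun ht => hut.ne (hD1 u hu t ht)
  exact ((G.compl_adj d t).1 hdt).2 (hD1 u hu d hd ▸ hut)

lemma gammaCer_compl_le_two_of_degree_eq_one (h5 : 5 ≤ Fintype.card V) {l₁ w₁ l₂ w₂ : V}
    (hl₁ : G.degree l₁ = 1) (h₁ : G.Adj l₁ w₁) (hl₂ : G.degree l₂ = 1) (h₂ : G.Adj l₂ w₂)
    (hw : w₁ ≠ w₂) : gammaCer Gᶜ ≤ 2 := by
  have hcert := isCertDomSet_pair_of_forall_adj h5
    (fun x hx hxw => compl_adj_of_degree_eq_one hl₁ h₁ hx hxw)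
    (fun x hx hxw => compl_adj_of_degree_eq_one hl₂ h₂ hx hxw)
    fun h => (G.compl_adj l₂ w₁).2
      ⟨h.symm, fun h' => hw (eq_of_adj_of_degree_eq_one hl₂ h' h₂)⟩
  exact hcert.gammaCer_le.trans card_le_two

lemma IsCorona.exists_leaves_adj_ne (hG : IsCorona G) (h3 : 3 ≤ Fintype.card V) :
    ∃ l₁ w₁ l₂ w₂,
      G.degree l₁ = 1 ∧ G.Adj l₁ w₁ ∧ G.degree l₂ = 1 ∧ G.Adj l₂ w₂ ∧ w₁ ≠ w₂ := by
  have : Nonempty V := Fintype.card_pos_iff.1 (by omega)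
  obtain ⟨l₁, w₁, hl₁, h₁, -⟩ := hG.exists_leaf_adj (Classical.arbitrary V)
  obtain ⟨v, -, hv⟩ := exists_mem_notMem_of_card_lt_card (s := {l₁, w₁}) (t := univ)
    (by rw [card_univ]; exact card_le_two.trans_lt (by omega))
  obtain ⟨l₂, w₂, hl₂, h₂, hv₂⟩ := hG.exists_leaf_adj v
  refine ⟨l₁, w₁, l₂, w₂, hl₁, h₁, hl₂, h₂, fun hw => hv ?_⟩
  subst hw
  obtain rfl := hG.eq_of_adj_of_degree_eq_one hl₁ hl₂ h₁.symm h₂.symm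
  rcases hv₂ with rfl | rfl <;> simp

theorem IsCorona.gammaCer_compl_eq_two (h5 : 5 ≤ Fintype.card V) (hG : IsCorona G) :
    gammaCer Gᶜ = 2 := by
  have : Nonempty V := Fintype.card_pos_iff.1 (by omega)
  obtain ⟨l₁, w₁, l₂, w₂, hl₁, h₁, hl₂, h₂, hw⟩ := hG.exists_leaves_adj_ne (by omega)
  exact (gammaCer_compl_le_two_of_degree_eq_one h5 hl₁ h₁ hl₂ h₂ hw).antisymm
    ((two_le_gamma_compl hG.degree_pos).trans (gamma_le_gammaCer Gᶜ))

end Corona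

section NonCorona

variable {G : SimpleGraph V} [DecidableRel G.Adj]

variable (G) in
def IsMaximalIndepIn (B M : Finset V) : Prop :=
  M ⊆ B ∧ G.IsIndepSet M ∧ ∀ b ∈ B, b ∉ M → ∃ m ∈ M, G.Adj m b

variable (G) in
lemma exists_isMaximalIndepIn (B : Finset V) : ∃ M, IsMaximalIndepIn G B M := by
  classical
  obtain ⟨M, hM, hmax⟩ := exists_max_image
    ({M ∈ B.powerset | G.IsIndepSet (M : Set V)} : Finset (Finset V)) card ⟨∅, by simp⟩
  rw [mem_filter, mem_powerset] at hM
  refine ⟨M, hM.1, hM.2, fun b hb hbM => ?_⟩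
  by_contra! hno
  have hins :
      insert b M ∈ ({M ∈ B.powerset | G.IsIndepSet (M : Set V)} : Finset (Finset V)) := by
    rw [mem_filter, mem_powerset, coe_insert, SimpleGraph.IsIndepSet, Set.pairwise_insert]
    exact ⟨insert_subset hb hM.1, hM.2, fun m hm _ => ⟨fun h => hno m hm h.symm, hno m hm⟩⟩
  have := hmax _ hins
  rw [card_insert_of_notMem hbM] at this
  omega

variable (G) in
def farFromLeaves : Finset V := {v | G.degree v ≠ 1 ∧ ∀ w, G.Adj v w → G.degree w ≠ 1}

variable (G) in
def farCore : Finset V := {v ∈ farFromLeaves G | ∀ w, G.Adj v w → w ∈ farFromLeaves G}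

variable (G) in
def farOrLeafNbrs (w : V) : Finset V :=
  {x ∈ G.neighborFinset w | x ∈ farFromLeaves G ∨ G.degree x = 1}

variable (G) in
def spareLeaves : Finset V :=
  {l | G.degree l = 1 ∧ ∃ w, G.Adj l w ∧ 2 ≤ #(farOrLeafNbrs G w)}

/-- The complement of `spareSet G M` is a proper certified dominating set when `G` has no
isolated vertex and is not a corona. It removes the vertices at distance at least two from all
leaves except those of `M`, an independent set dominating the ones all of whose neighbours are
also that far, and the leaves whose support has at least two neighbours that are leaves or far
from leaves; so every support keeps either none or at least two removed neighbours. -/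
def spareSet (G : SimpleGraph V) [DecidableRel G.Adj] (M : Finset V) : Finset V :=
  (farFromLeaves G \ M) ∪ spareLeaves G

variable {M : Finset V}

lemma mem_spareSet {v : V} :
    v ∈ spareSet G M ↔ v ∈ farFromLeaves G ∧ v ∉ M ∨ v ∈ spareLeaves G := by
  simp [spareSet]

lemma degree_ne_one_of_mem_farFromLeaves {v : V} (hv : v ∈ farFromLeaves G) :
    G.degree v ≠ 1 := by
  simp only [farFromLeaves, mem_filter, mem_univ, true_and] at hv
  exact hv.1

lemma degree_eq_one_of_mem_spareLeaves {v : V} (hv : v ∈ spareLeaves G) : G.degree v = 1 := by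
  simp only [spareLeaves, mem_filter, mem_univ, true_and] at hv
  exact hv.1

lemma mem_farFromLeaves_of_adj_of_mem_farCore {v w : V} (hv : v ∈ farCore G)
    (hvw : G.Adj v w) : w ∈ farFromLeaves G := by
  simp only [farCore, mem_filter] at hv
  exact hv.2 w hvw

lemma notMem_farFromLeaves_of_adj {w l : V} (hl : G.degree l = 1) (hwl : G.Adj w l) :
    w ∉ farFromLeaves G := by
  simp only [farFromLeaves, mem_filter, mem_univ, true_and, not_and_or, not_forall, not_not]
  exact Or.inr ⟨l, hwl, hl⟩

lemma notMem_spareLeaves_of_adj {w l : V} (hl : G.degree l = 1) (hwl : G.Adj w l) :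
    w ∉ spareLeaves G := by
  simp only [spareLeaves, mem_filter, mem_univ, true_and, not_and, not_exists]
  intro hw w' hww' h2
  obtain rfl := eq_of_adj_of_degree_eq_one hw hww' hwl
  have : #(farOrLeafNbrs G w') ≤ 1 :=
    (card_filter_le _ _).trans (by rw [G.card_neighborFinset_eq_degree]; exact hl.le)
  omega

lemma notMem_spareSet_of_adj {w l : V} (hl : G.degree l = 1) (hwl : G.Adj w l) :
    w ∉ spareSet G M := by
  simp only [spareSet, mem_union, mem_sdiff, not_or]
  exact ⟨fun h => notMem_farFromLeaves_of_adj hl hwl h.1, notMem_spareLeaves_of_adj hl hwl⟩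

lemma two_le_card_farOrLeafNbrs_of_mem_spareLeaves {l w : V} (hl : l ∈ spareLeaves G)
    (hlw : G.Adj l w) : 2 ≤ #(farOrLeafNbrs G w) := by
  simp only [spareLeaves, mem_filter, mem_univ, true_and] at hl
  obtain ⟨hl, w', hlw', h2⟩ := hl
  rwa [eq_of_adj_of_degree_eq_one hl hlw hlw']

lemma isDomSet_compl_spareSet (hM : IsMaximalIndepIn G (farCore G) M) :
    IsDomSet G (spareSet G M)ᶜ := by
  intro v hv
  simp only [mem_compl, not_not, mem_spareSet] at hv ⊢
  rcases hv with ⟨hvR, hvM⟩ | hvE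
  · by_cases hvB : v ∈ farCore G
    · obtain ⟨m, hm, hmv⟩ := hM.2.2 v hvB hvM
      have hmR : m ∈ farFromLeaves G := (mem_filter.1 (hM.1 hm)).1
      refine ⟨m, fun h => h.elim (fun h => h.2 hm) fun h => ?_, hmv⟩
      exact degree_ne_one_of_mem_farFromLeaves hmR (degree_eq_one_of_mem_spareLeaves h)
    · obtain ⟨w, hvw, hwR⟩ : ∃ w, G.Adj v w ∧ w ∉ farFromLeaves G := by
        simpa [farCore, hvR] using hvB
      have hw1 : G.degree w ≠ 1 := by
        simp only [farFromLeaves, mem_filter, mem_univ, true_and] at hvR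
        exact hvR.2 w hvw
      exact ⟨w, fun h => h.elim (fun h => hwR h.1) fun h =>
        hw1 (degree_eq_one_of_mem_spareLeaves h), hvw.symm⟩
  · obtain ⟨w, hvw⟩ := exists_adj_of_degree_eq_one (degree_eq_one_of_mem_spareLeaves hvE)
    have := notMem_spareSet_of_adj (M := M) (degree_eq_one_of_mem_spareLeaves hvE) hvw.symm
    exact ⟨w, by simpa [mem_spareSet] using this, hvw.symm⟩

lemma neighborFinset_inter_spareSet_eq_empty {d : V} (hd : G.degree d = 1) :
    G.neighborFinset d ∩ spareSet G M = ∅ :=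
  eq_empty_of_forall_notMem fun x hx => by
    rw [mem_inter, SimpleGraph.mem_neighborFinset] at hx
    exact notMem_spareSet_of_adj hd hx.1.symm hx.2

lemma neighborFinset_subset_spareSet (hM : IsMaximalIndepIn G (farCore G) M) {d : V}
    (hd : d ∈ M) : G.neighborFinset d ⊆ spareSet G M := fun x hx => by
  rw [SimpleGraph.mem_neighborFinset] at hx
  exact mem_spareSet.2 (Or.inl ⟨mem_farFromLeaves_of_adj_of_mem_farCore (hM.1 hd) hx,
    fun hxM => hM.2.1 hd hxM (G.ne_of_adj hx) hx⟩)

lemma card_neighborFinset_inter_spareSet_of_adj (hM : IsMaximalIndepIn G (farCore G) M)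
    {d l : V} (hl : G.degree l = 1) (hdl : G.Adj d l) :
    #(G.neighborFinset d ∩ spareSet G M) = 0 ∨ 2 ≤ #(G.neighborFinset d ∩ spareSet G M) := by
  have hlC : l ∈ farOrLeafNbrs G d := by simp [farOrLeafNbrs, hdl, hl]
  by_cases h2 : 2 ≤ #(farOrLeafNbrs G d)
  · refine Or.inr (h2.trans (card_le_card fun x hx => ?_))
    simp only [farOrLeafNbrs, mem_filter, SimpleGraph.mem_neighborFinset] at hx
    refine mem_inter.2 ⟨(G.mem_neighborFinset d x).2 hx.1, mem_spareSet.2 ?_⟩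
    rcases hx.2 with hxR | hx1
    · refine Or.inl ⟨hxR, fun hxM => ?_⟩
      exact notMem_farFromLeaves_of_adj hl hdl
        (mem_farFromLeaves_of_adj_of_mem_farCore (hM.1 hxM) hx.1.symm)
    · exact Or.inr (by simpa [spareLeaves, hx1] using ⟨d, hx.1.symm, h2⟩)
  · refine Or.inl (card_eq_zero.2 (eq_empty_of_forall_notMem fun x hx => ?_))
    rw [mem_inter, mem_spareSet] at hx
    have hxC : x ∈ farOrLeafNbrs G d :=
      mem_filter.2 ⟨hx.1, hx.2.imp And.left degree_eq_one_of_mem_spareLeaves⟩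
    obtain rfl := card_le_one.1 (by omega) x hxC l hlC
    rcases hx.2 with hxR | hxE
    · exact degree_ne_one_of_mem_farFromLeaves hxR.1 hl
    · exact h2 (two_le_card_farOrLeafNbrs_of_mem_spareLeaves hxE hdl.symm)

lemma isCertDomSet_compl_spareSet (hδ : ∀ v, 0 < G.degree v)
    (hM : IsMaximalIndepIn G (farCore G) M) : IsCertDomSet G (spareSet G M)ᶜ := by
  refine ⟨isDomSet_compl_spareSet hM, fun d hd => ?_⟩
  rw [sdiff_compl, inf_eq_inter]
  rw [mem_compl, mem_spareSet, not_or, not_and_or, not_not] at hd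
  by_cases hd1 : G.degree d = 1
  · exact Or.inl (by rw [neighborFinset_inter_spareSet_eq_empty hd1, card_empty])
  by_cases hdR : d ∈ farFromLeaves G
  · have hdM : d ∈ M := hd.1.resolve_left (not_not.2 hdR)
    rw [inter_eq_left.2 (neighborFinset_subset_spareSet hM hdM),
      G.card_neighborFinset_eq_degree]
    have := hδ d
    omega
  · obtain ⟨l, hdl, hl⟩ : ∃ l, G.Adj d l ∧ G.degree l = 1 := by
      simpa [farFromLeaves, hd1] using hdR
    exact card_neighborFinset_inter_spareSet_of_adj hM hl hdl

lemma spareSet_nonempty (hδ : ∀ v, 0 < G.degree v) (hG : ¬IsCorona G)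
    (hM : IsMaximalIndepIn G (farCore G) M) : (spareSet G M).Nonempty := by
  obtain ⟨x, hx⟩ := not_forall.1 hG
  rw [not_or] at hx
  rcases Nat.lt_or_ge #(leafNbrs G x) 1 with h0 | h2
  · have hxR : x ∈ farFromLeaves G := by
      simp only [farFromLeaves, mem_filter, mem_univ, true_and]
      refine ⟨hx.1, fun w hxw hw => ?_⟩
      have : 0 < #(leafNbrs G x) :=
        card_pos.2 ⟨w, mem_filter.2 ⟨(G.mem_neighborFinset x w).2 hxw, hw⟩⟩
      omega
    by_cases hxM : x ∈ M
    · obtain ⟨y, hxy⟩ := (G.degree_pos_iff_exists_adj x).1 (hδ x)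
      exact ⟨y, neighborFinset_subset_spareSet hM hxM ((G.mem_neighborFinset x y).2 hxy)⟩
    · exact ⟨x, mem_spareSet.2 (Or.inl ⟨hxR, hxM⟩)⟩
  · obtain ⟨l, hl⟩ := card_pos.1 (show 0 < #(leafNbrs G x) by omega)
    have hsub : leafNbrs G x ⊆ farOrLeafNbrs G x :=
      monotone_filter_right _ fun _ _ h => Or.inr h
    have h2' : 2 ≤ #(farOrLeafNbrs G x) := by
      have := card_le_card hsub
      have : #(leafNbrs G x) ≠ 1 := hx.2
      omega
    simp only [mem_filter, SimpleGraph.mem_neighborFinset] at hl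
    refine ⟨l, mem_spareSet.2 (Or.inr ?_)⟩
    simpa [spareLeaves, hl.2] using ⟨x, hl.1.symm, h2'⟩

theorem gammaCer_lt_card_of_not_isCorona (hδ : ∀ v, 0 < G.degree v) (hG : ¬IsCorona G) :
    gammaCer G < Fintype.card V := by
  obtain ⟨M, hM⟩ := exists_isMaximalIndepIn G (farCore G)
  have h1 := (isCertDomSet_compl_spareSet hδ hM).gammaCer_le
  have h2 := (spareSet_nonempty hδ hG hM).card_pos
  rw [card_compl] at h1
  have := card_le_univ (spareSet G M)
  omega

end NonCorona

theorem gammaCer_eq_card_and_gammaCer_compl_eq_two_iff {G : SimpleGraph V}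
    [DecidableRel G.Adj] (h5 : 5 ≤ Fintype.card V) :
    gammaCer G = Fintype.card V ∧ gammaCer Gᶜ = 2 ↔ IsCorona G := by
  refine ⟨fun ⟨ha, hb⟩ => by_contra fun hG => ?_,
    fun hG => ⟨hG.gammaCer_eq_card, hG.gammaCer_compl_eq_two h5⟩⟩
  have hδ (v : V) : 0 < G.degree v := Nat.pos_of_ne_zero fun hv => by
    have := gammaCer_compl_le_one_of_degree_eq_zero h5 hv
    omega
  have := gammaCer_lt_card_of_not_isCorona hδ hG
  omega

theorem nordhausGaddum (G : SimpleGraph V) [DecidableRel G.Adj]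
    (hcard : 5 ≤ Fintype.card V) :
    gammaCer G + gammaCer Gᶜ ≤ Fintype.card V + 2 ∧
    gammaCer G * gammaCer Gᶜ ≤ 2 * Fintype.card V ∧
    (gammaCer G + gammaCer Gᶜ = Fintype.card V + 2 ↔
      gammaCer G * gammaCer Gᶜ = 2 * Fintype.card V) ∧
    (gammaCer G + gammaCer Gᶜ = Fintype.card V + 2 ↔
      ((∀ v : V, IsLeaf G v ∨ IsWeakSupport G v) ∨
        (∀ v : V, IsLeaf Gᶜ v ∨ IsWeakSupport Gᶜ v))) := by
  obtain ⟨hsum, hprod, hsum_eq, hprod_eq⟩ := Nat.nordhausGaddum_bounds (by omega)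
    (gammaCer_le_card G) (gammaCer_le_card Gᶜ)
    (gammaCer_sub_one_mul_gammaCer_compl_sub_one_le hcard)
  refine ⟨hsum, hprod, hsum_eq.trans hprod_eq.symm, hsum_eq.trans ?_⟩
  change _ ↔ IsCorona G ∨ IsCorona Gᶜ
  rw [← gammaCer_eq_card_and_gammaCer_compl_eq_two_iff hcard,
    ← gammaCer_eq_card_and_gammaCer_compl_eq_two_iff hcard, gammaCer_congr _ (compl_compl G)]
  tauto
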